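/- arXiv:2110.15634 — 2 statements merged into one kernel-verified Lean document; each statement's English description precedes it below -/
import Mathlib

section
/- Let X be a nonempty set, let n and d be positive integers, and let g_1, …, g_n : X → ℝ be nonnegative functions such that ∑_{i=1}^n g_i(x) > 0 for every x ∈ X. Define F : X × (0,∞) → ℝ by F(x,C) = (d/2)·log C + (1/(2nC))·∑_{i=1}^n g_i(x). If x_0 minimizes x ↦ ∑_{i=1}^n g_i(x) over X, then the pair (x_0, C_0) with C_0 = (1/(nd))·∑_{i=1}^n g_i(x_0) is a global minimizer of F over X × (0,∞). Conversely, if (x_1, C_1) is a global minimizer of F, then x_1 minimizes x ↦ ∑_{i=1}^n g_i(x) over X and C_1 = (1/(nd))·∑_{i=1}^n g_i(x_1). -/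
/-!
For fixed `x` the map `C ↦ a log C + S x / C` (with `a, S x > 0`) is minimized exactly at
`C = S x / a`, by `log u ≤ u - 1` applied to `u = S x / (a C)`, with equality only at `u = 1`.
Its minimum value `a log (S x / a) + a` is increasing in `S x`, so minimizing jointly in
`(x, C)` amounts to minimizing `S` and then taking `C = S x / a`.
-/

open Real

namespace Real

theorem mul_log_div_add_lt {a b C : ℝ} (ha : 0 < a) (hb : 0 < b) (hC : 0 < C)
    (hne : C ≠ b / a) : a * log (b / a) + a < a * log C + b / C := by
  have hu : 0 < b / a / C := by positivity
  have hu1 : b / a / C ≠ 1 := by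
    rwa [ne_eq, div_eq_one_iff_eq hC.ne', eq_comm]
  have hlog := log_lt_sub_one_of_pos hu hu1
  rw [log_div (by positivity) hC.ne'] at hlog
  have hbC : b / C = a * (b / a / C) := by field_simp
  rw [hbC]
  linarith [mul_lt_mul_of_pos_left hlog ha]

theorem mul_log_div_add_le {a b C : ℝ} (ha : 0 < a) (hb : 0 < b) (hC : 0 < C) :
    a * log (b / a) + a ≤ a * log C + b / C := by
  rcases eq_or_ne C (b / a) with rfl | hne
  · rw [div_div_cancel₀ hb.ne']
  · exact (mul_log_div_add_lt ha hb hC hne).le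

end Real

section JointMinimization

variable {X : Type*} {a : ℝ} {S : X → ℝ}

theorem mul_log_add_div_min_le (ha : 0 < a) (hS : ∀ x, 0 < S x) {x₀ : X}
    (hx₀ : ∀ x, S x₀ ≤ S x) (x : X) {C : ℝ} (hC : 0 < C) :
    a * log (S x₀ / a) + S x₀ / (S x₀ / a) ≤ a * log C + S x / C := by
  have hprofile : a * log (S x₀ / a) ≤ a * log (S x / a) := by
    gcongr
    · exact div_pos (hS x₀) ha
    · exact hx₀ x
  rw [div_div_cancel₀ (hS x₀).ne']
  linarith [mul_log_div_add_le ha (hS x) hC]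

theorem isMin_and_eq_of_mul_log_add_div_min (ha : 0 < a) (hS : ∀ x, 0 < S x) {x₁ : X}
    {C₁ : ℝ} (hC₁ : 0 < C₁)
    (hmin : ∀ x C, 0 < C → a * log C₁ + S x₁ / C₁ ≤ a * log C + S x / C) :
    (∀ x, S x₁ ≤ S x) ∧ C₁ = S x₁ / a := by
  have hC₁_eq : C₁ = S x₁ / a := by
    by_contra hne
    have hopt := hmin x₁ (S x₁ / a) (div_pos (hS x₁) ha)
    rw [div_div_cancel₀ (hS x₁).ne'] at hopt
    linarith [mul_log_div_add_lt ha (hS x₁) hC₁ hne]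
  refine ⟨fun x => ?_, hC₁_eq⟩
  have hopt := hmin x (S x / a) (div_pos (hS x) ha)
  rw [hC₁_eq, div_div_cancel₀ (hS x₁).ne', div_div_cancel₀ (hS x).ne'] at hopt
  have hlog : log (S x₁ / a) ≤ log (S x / a) := le_of_mul_le_mul_left (by linarith) ha
  rw [log_le_log_iff (div_pos (hS x₁) ha) (div_pos (hS x) ha)] at hlog
  exact (div_le_div_iff_of_pos_right ha).mp hlog

end JointMinimization

theorem stmt1_general {X : Type*} (n d : ℕ) (hn : 0 < n) (hd : 0 < d)
    (g : Fin n → X → ℝ) (hpos : ∀ x, 0 < ∑ i, g i x) :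
    let F : X → ℝ → ℝ :=
      fun x C => ((d : ℝ) / 2) * Real.log C + (1 / (2 * n * C)) * ∑ i, g i x
    (∀ x₀ : X, (∀ x, ∑ i, g i x₀ ≤ ∑ i, g i x) →
       (0 < (1 / ((n : ℝ) * d)) * ∑ i, g i x₀) ∧
       ∀ x : X, ∀ C : ℝ, 0 < C → F x₀ ((1 / ((n : ℝ) * d)) * ∑ i, g i x₀) ≤ F x C) ∧
    (∀ x₁ : X, ∀ C₁ : ℝ, 0 < C₁ → (∀ x : X, ∀ C : ℝ, 0 < C → F x₁ C₁ ≤ F x C) →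
       (∀ x, ∑ i, g i x₁ ≤ ∑ i, g i x) ∧ C₁ = (1 / ((n : ℝ) * d)) * ∑ i, g i x₁) := by
  intro F
  have hn' : (0 : ℝ) < n := Nat.cast_pos.mpr hn
  have ha : (0 : ℝ) < d / 2 := by positivity
  set S : X → ℝ := fun x => (∑ i, g i x) / (2 * n)
  have hS : ∀ x, 0 < S x := fun x => div_pos (hpos x) (by positivity)
  have hF : ∀ x C, F x C = (d / 2) * log C + S x / C := fun x C => by simp only [F, S]; ring
  have hC₀ : ∀ x, (1 / ((n : ℝ) * d)) * ∑ i, g i x = S x / (d / 2) := fun x => by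
    simp only [S]; ring
  have hS_le : ∀ x y, S x ≤ S y ↔ ∑ i, g i x ≤ ∑ i, g i y := fun x y =>
    div_le_div_iff_of_pos_right (by positivity)
  simp only [hF, hC₀, ← hS_le]
  exact ⟨fun x₀ hx₀ =>
      ⟨div_pos (hS x₀) ha, fun x _ hC => mul_log_add_div_min_le ha hS hx₀ x hC⟩,
    fun x₁ _ hC₁ hmin => isMin_and_eq_of_mul_log_add_div_min ha hS hC₁ hmin⟩

/-- Joint minimization of `F(x,C) = (d/2)·log C + (1/(2nC))·∑ gᵢ(x)` over `X × (0,∞)`: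
a minimizer of `∑ gᵢ` together with `C₀ = (1/(nd))·∑ gᵢ(x₀)` is a global minimizer of `F`,
and conversely. -/
theorem stmt1 {X : Type*} [Nonempty X] (n d : ℕ) (hn : 0 < n) (hd : 0 < d)
    (g : Fin n → X → ℝ) (hg : ∀ i x, 0 ≤ g i x) (hpos : ∀ x, 0 < ∑ i, g i x) :
    let F : X → ℝ → ℝ :=
      fun x C => ((d : ℝ) / 2) * Real.log C + (1 / (2 * n * C)) * ∑ i, g i x
    (∀ x₀ : X, (∀ x, ∑ i, g i x₀ ≤ ∑ i, g i x) →
       (0 < (1 / ((n : ℝ) * d)) * ∑ i, g i x₀) ∧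
       ∀ x : X, ∀ C : ℝ, 0 < C → F x₀ ((1 / ((n : ℝ) * d)) * ∑ i, g i x₀) ≤ F x C) ∧
    (∀ x₁ : X, ∀ C₁ : ℝ, 0 < C₁ → (∀ x : X, ∀ C : ℝ, 0 < C → F x₁ C₁ ≤ F x C) →
       (∀ x, ∑ i, g i x₁ ≤ ∑ i, g i x) ∧ C₁ = (1 / ((n : ℝ) * d)) * ∑ i, g i x₁) :=
  stmt1_general n d hn hd g hpos
end

section
/- Let c > 0, κ ∈ ℝ, and λ_1 ≥ λ_2 > 0, and let θ, h : ℝ → ℝ be differentiable functions satisfying θ'(t) = c²·κ·h(t) and h'(t) = −((λ_1² − λ_2²)/2)·sin(2θ(t)) for all t. Define v_1(t) = c·λ_1·cos(θ(t)), v_2(t) = c·λ_2·sin(θ(t)), and χ(t) = (c²/(λ_1 λ_2))·h(t). Then for all t: v_1'(t) = −κ·λ_1²·χ(t)·v_2(t), v_2'(t) = κ·λ_2²·χ(t)·v_1(t), and χ'(t) = ((λ_2² − λ_1²)/(λ_1² λ_2²))·v_1(t)·v_2(t). -/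
/-!
Differentiating `v₁ = cλ₁ cos θ`, `v₂ = cλ₂ sin θ` and `χ = (c²/(λ₁λ₂)) h` by the chain rule and
substituting `θ' = c²κh`, `h' = -((λ₁² - λ₂²)/2) sin 2θ` leaves three algebraic identities; the only
non-trivial input is `sin 2θ = 2 sin θ cos θ`, which turns `h'` into a multiple of `v₁ v₂`.
-/

open Real

section MostProbablePath

variable {c κ lam1 lam2 : ℝ} {θ h : ℝ → ℝ} {t : ℝ}

theorem hasDerivAt_mpp_v1 (hlam2 : lam2 ≠ 0) (hθ : HasDerivAt θ (c ^ 2 * κ * h t) t) :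
    HasDerivAt (fun s => c * lam1 * cos (θ s))
      (-(κ * lam1 ^ 2 * (c ^ 2 / (lam1 * lam2) * h t) * (c * lam2 * sin (θ t)))) t :=
  (hθ.cos.const_mul _).congr_deriv (by field_simp)

theorem hasDerivAt_mpp_v2 (hlam1 : lam1 ≠ 0) (hθ : HasDerivAt θ (c ^ 2 * κ * h t) t) :
    HasDerivAt (fun s => c * lam2 * sin (θ s))
      (κ * lam2 ^ 2 * (c ^ 2 / (lam1 * lam2) * h t) * (c * lam1 * cos (θ t))) t :=
  (hθ.sin.const_mul _).congr_deriv (by field_simp)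

theorem hasDerivAt_mpp_chi
    (hh : HasDerivAt h (-((lam1 ^ 2 - lam2 ^ 2) / 2) * sin (2 * θ t)) t) :
    HasDerivAt (fun s => c ^ 2 / (lam1 * lam2) * h s)
      ((lam2 ^ 2 - lam1 ^ 2) / (lam1 ^ 2 * lam2 ^ 2) *
        (c * lam1 * cos (θ t) * (c * lam2 * sin (θ t)))) t := by
  refine (hh.const_mul _).congr_deriv ?_
  -- holds also when `lam1 * lam2 = 0`, since `x / x ^ 2 = x⁻¹` for every `x` in a field
  have hinv : lam1 * lam2 / (lam1 ^ 2 * lam2 ^ 2) = (lam1 * lam2)⁻¹ := by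
    rw [← mul_pow, sq, div_self_mul_self']
  calc c ^ 2 / (lam1 * lam2) * (-((lam1 ^ 2 - lam2 ^ 2) / 2) * sin (2 * θ t))
      = (lam2 ^ 2 - lam1 ^ 2) * c ^ 2 * cos (θ t) * sin (θ t) * (lam1 * lam2)⁻¹ := by
        rw [sin_two_mul]; ring
    _ = _ := by rw [← hinv]; ring

end MostProbablePath

theorem stmt14_general (c κ lam1 lam2 : ℝ) (hl : lam1 ≥ lam2) (hl2 : 0 < lam2)
    (θ h : ℝ → ℝ)
    (hθ : ∀ t, HasDerivAt θ (c ^ 2 * κ * h t) t)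
    (hh : ∀ t, HasDerivAt h (-((lam1 ^ 2 - lam2 ^ 2) / 2) * Real.sin (2 * θ t)) t) :
    let v1 : ℝ → ℝ := fun t => c * lam1 * Real.cos (θ t)
    let v2 : ℝ → ℝ := fun t => c * lam2 * Real.sin (θ t)
    let χ : ℝ → ℝ := fun t => (c ^ 2 / (lam1 * lam2)) * h t
    ∀ t : ℝ,
      HasDerivAt v1 (-(κ * lam1 ^ 2 * χ t * v2 t)) t ∧
      HasDerivAt v2 (κ * lam2 ^ 2 * χ t * v1 t) t ∧
      HasDerivAt χ ((lam2 ^ 2 - lam1 ^ 2) / (lam1 ^ 2 * lam2 ^ 2) * (v1 t * v2 t)) t := by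
  intro v1 v2 χ t
  have hlam1 : lam1 ≠ 0 := (hl2.trans_le hl).ne'
  exact ⟨hasDerivAt_mpp_v1 hl2.ne' (hθ t), hasDerivAt_mpp_v2 hlam1 (hθ t),
    hasDerivAt_mpp_chi (hh t)⟩

/-- Coordinate form of the most probable path equations on a surface: the substitution
`v₁ = c·λ₁·cos θ`, `v₂ = c·λ₂·sin θ`, `χ = (c²/(λ₁λ₂))·h` transforms the system
`θ' = c²·κ·h`, `h' = −((λ₁²−λ₂²)/2)·sin 2θ` into the eigenframe MPP equations. -/
theorem stmt14 (c κ lam1 lam2 : ℝ) (hc : 0 < c) (hl : lam1 ≥ lam2) (hl2 : 0 < lam2)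
    (θ h : ℝ → ℝ)
    (hθ : ∀ t, HasDerivAt θ (c ^ 2 * κ * h t) t)
    (hh : ∀ t, HasDerivAt h (-((lam1 ^ 2 - lam2 ^ 2) / 2) * Real.sin (2 * θ t)) t) :
    let v1 : ℝ → ℝ := fun t => c * lam1 * Real.cos (θ t)
    let v2 : ℝ → ℝ := fun t => c * lam2 * Real.sin (θ t)
    let χ : ℝ → ℝ := fun t => (c ^ 2 / (lam1 * lam2)) * h t
    ∀ t : ℝ,
      HasDerivAt v1 (-(κ * lam1 ^ 2 * χ t * v2 t)) t ∧
      HasDerivAt v2 (κ * lam2 ^ 2 * χ t * v1 t) t ∧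
      HasDerivAt χ ((lam2 ^ 2 - lam1 ^ 2) / (lam1 ^ 2 * lam2 ^ 2) * (v1 t * v2 t)) t :=
  stmt14_general c κ lam1 lam2 hl hl2 θ h hθ hh
end
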